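/- arXiv:2207.00926 — 2 statements merged into one kernel-verified Lean document; each statement's English description precedes it below -/
import Mathlib

section
/- Let μ₁, μ₂, c₁, c₂ ∈ ℝ and ρ ∈ [0,1). Then the lower-quadrant probability of the bivariate normal distribution admits the mixture representation ∬_{x<c₁, y<c₂} f_ρ(x,y) dx dy = ∫_ℝ Φ((c₁ − μ₁ − √ρ·u)/√(1−ρ)) · Φ((c₂ − μ₂ − √ρ·u)/√(1−ρ)) · φ(u) du. -/
open MeasureTheory Real Set Filter Asymptotics

/-- Standard normal density. -/
noncomputable def stdPDF (x : ℝ) : ℝ := (Real.sqrt (2 * Real.pi))⁻¹ * Real.exp (-x ^ 2 / 2)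

/-- Standard normal CDF. -/
noncomputable def stdCDF (x : ℝ) : ℝ := ∫ u in Set.Iio x, stdPDF u

/-- Bivariate normal density with means `μ₁ μ₂`, unit variances, correlation `ρ`. -/
noncomputable def bvnPDF (μ₁ μ₂ ρ x y : ℝ) : ℝ :=
  (2 * Real.pi * Real.sqrt (1 - ρ ^ 2))⁻¹ *
    Real.exp (-((x - μ₁) ^ 2 - 2 * ρ * (x - μ₁) * (y - μ₂) + (y - μ₂) ^ 2) / (2 * (1 - ρ ^ 2)))

/-- `Q(ρ)`: probability both coordinates exceed `|z|` in absolute value. -/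
noncomputable def quadProb (μ₁ μ₂ z ρ : ℝ) : ℝ :=
  ∫ p in {p : ℝ × ℝ | |z| < |p.1| ∧ |z| < |p.2|}, bvnPDF μ₁ μ₂ ρ p.1 p.2

/-- `Cov(ρ)`: covariance of the two-sided rejection indicators. -/
noncomputable def covInd (μ₁ μ₂ z ρ : ℝ) : ℝ :=
  quadProb μ₁ μ₂ z ρ -
    (stdCDF (z + μ₁) + stdCDF (z - μ₁)) * (stdCDF (z + μ₂) + stdCDF (z - μ₂))

/-!
With `r = √ρ` and `s = √(1 - ρ)`, the pair `(μ₁ + r U + s Z₁, μ₂ + r U + s Z₂)`, for independent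
standard normals `U, Z₁, Z₂`, has density `f_ρ`. At the level of densities this is the identity
`f_ρ(x, y) = ∫ φ_s(x - μ₁ - r u) φ_s(y - μ₂ - r u) φ(u) du`, with `φ_s` the `N(0, s²)` density,
a Gaussian integral in `u` evaluated by completing the square. Integrating over the quadrant and
exchanging the integrals, the inner integral over the quadrant splits into a product of two
normal CDFs.
-/

open ProbabilityTheory

lemma stdPDF_eq_gaussianPDFReal : stdPDF = gaussianPDFReal 0 1 := by
  ext x; simp [stdPDF, gaussianPDFReal]

lemma stdPDF_nonneg (x : ℝ) : 0 ≤ stdPDF x := by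
  unfold stdPDF; positivity

@[fun_prop]
lemma continuous_stdPDF : Continuous stdPDF := by
  unfold stdPDF; fun_prop

lemma integrable_stdPDF : Integrable stdPDF :=
  stdPDF_eq_gaussianPDFReal ▸ integrable_gaussianPDFReal 0 1

lemma integral_stdPDF : ∫ x, stdPDF x = 1 :=
  stdPDF_eq_gaussianPDFReal ▸ integral_gaussianPDFReal_eq_one 0 one_ne_zero

/-- The density of `s • Z` for `Z` standard normal. -/
noncomputable def scaledStdPDF (s t : ℝ) : ℝ := s⁻¹ * stdPDF (t / s)

@[fun_prop]
lemma continuous_scaledStdPDF (s : ℝ) : Continuous (scaledStdPDF s) := by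
  unfold scaledStdPDF; fun_prop

lemma scaledStdPDF_nonneg {s : ℝ} (hs : 0 ≤ s) (t : ℝ) : 0 ≤ scaledStdPDF s t :=
  mul_nonneg (inv_nonneg.2 hs) (stdPDF_nonneg _)

lemma integrable_scaledStdPDF_comp_sub {s : ℝ} (hs : s ≠ 0) (d : ℝ) :
    Integrable fun x => scaledStdPDF s (x - d) :=
  ((integrable_stdPDF.comp_div hs).comp_sub_right d).const_mul s⁻¹

lemma integral_scaledStdPDF_comp_sub {s : ℝ} (hs : 0 < s) (d : ℝ) :
    ∫ x, scaledStdPDF s (x - d) = 1 := by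
  simp only [scaledStdPDF]
  rw [integral_const_mul, integral_sub_right_eq_self (fun x => stdPDF (x / s)) d,
    Measure.integral_comp_div, integral_stdPDF, abs_of_pos hs, smul_eq_mul, mul_one,
    inv_mul_cancel₀ hs.ne']

lemma setIntegral_Iio_scaledStdPDF_comp_sub {s : ℝ} (hs : 0 < s) (c d : ℝ) :
    ∫ x in Iio c, scaledStdPDF s (x - d) = stdCDF ((c - d) / s) := by
  have hind : ∀ x, (Iio c).indicator (fun x => scaledStdPDF s (x - d)) x
      = s⁻¹ * (Iio ((c - d) / s)).indicator stdPDF ((x - d) / s) := by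
    intro x
    simp only [indicator, mem_Iio, div_lt_div_iff_of_pos_right hs, sub_lt_sub_iff_right,
      scaledStdPDF]
    split_ifs <;> simp
  rw [← integral_indicator measurableSet_Iio, integral_congr_ae (ae_of_all _ hind),
    integral_const_mul,
    integral_sub_right_eq_self (fun x => (Iio ((c - d) / s)).indicator stdPDF (x / s)) d,
    Measure.integral_comp_div, integral_indicator measurableSet_Iio, abs_of_pos hs, smul_eq_mul,
    inv_mul_cancel_left₀ hs.ne', stdCDF]

lemma integral_exp_neg_mul_sub_sq (b m : ℝ) : ∫ u, exp (-b * (u - m) ^ 2) = √(π / b) := by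
  rw [integral_sub_right_eq_self (fun u => exp (-b * u ^ 2)) m, integral_gaussian]

lemma bvnPDF_sq_eq_integral {r s : ℝ} (hs : 0 < s) (hs2 : s ^ 2 = 1 - r ^ 2) (μ₁ μ₂ x y : ℝ) :
    bvnPDF μ₁ μ₂ (r ^ 2) x y
      = ∫ u, scaledStdPDF s (x - μ₁ - r * u) * scaledStdPDF s (y - μ₂ - r * u) * stdPDF u := by
  rw [bvnPDF]
  set a := x - μ₁
  set b := y - μ₂
  set D := -(a ^ 2 - 2 * r ^ 2 * a * b + b ^ 2) / (2 * (1 - (r ^ 2) ^ 2))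
  set β := (1 + r ^ 2) / (2 * s ^ 2)
  set m := r * (a + b) / (1 + r ^ 2)
  have h1r : 0 < 1 + r ^ 2 := by positivity
  have hr4 : 1 - (r ^ 2) ^ 2 = s ^ 2 * (1 + r ^ 2) := by rw [hs2]; ring
  have hsq : ∀ u, -((a - r * u) / s) ^ 2 / 2 + (-((b - r * u) / s) ^ 2 / 2 + -u ^ 2 / 2)
      = D + -β * (u - m) ^ 2 := by
    intro u
    simp only [D, β, m, hr4]
    field_simp
    linear_combination (-(u ^ 2) * (1 + r ^ 2)) * hs2
  have hfun : ∀ u, scaledStdPDF s (a - r * u) * scaledStdPDF s (b - r * u) * stdPDF u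
      = (s ^ 2 * √(2 * π) ^ 3)⁻¹ * exp D * exp (-β * (u - m) ^ 2) := by
    intro u
    simp only [scaledStdPDF, stdPDF]
    rw [mul_assoc _ (exp D), ← exp_add, ← hsq]
    simp only [exp_add]
    ring
  have hsqrt : √(1 - (r ^ 2) ^ 2) = s * √(1 + r ^ 2) := by
    rw [hr4, sqrt_mul (sq_nonneg s), sqrt_sq hs.le]
  have hβ : √(π / β) = √(2 * π) * s / √(1 + r ^ 2) := by
    rw [show π / β = (2 * π) * s ^ 2 / (1 + r ^ 2) by simp only [β]; field_simp,
      sqrt_div' _ h1r.le, sqrt_mul (by positivity), sqrt_sq hs.le]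
  rw [integral_congr_ae (ae_of_all _ hfun), integral_const_mul, integral_exp_neg_mul_sub_sq, hβ,
    hsqrt, mul_right_comm _ (exp D)]
  congr 1
  have h2π : 2 * π = √(2 * π) ^ 2 := (sq_sqrt (by positivity)).symm
  -- hide `√(2 * π)` so that the rewrite only touches the bare `2 * π`
  set t := √(2 * π)
  rw [h2π]
  field_simp

lemma setIntegral_prod_Iio_scaledStdPDF_mul {s : ℝ} (hs : 0 < s) (a b c₁ c₂ : ℝ) :
    ∫ p in Iio c₁ ×ˢ Iio c₂, scaledStdPDF s (p.1 - a) * scaledStdPDF s (p.2 - b)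
      = stdCDF ((c₁ - a) / s) * stdCDF ((c₂ - b) / s) := by
  rw [Measure.volume_eq_prod, ← Measure.prod_restrict,
    integral_prod_mul (fun x => scaledStdPDF s (x - a)) (fun y => scaledStdPDF s (y - b)),
    setIntegral_Iio_scaledStdPDF_comp_sub hs, setIntegral_Iio_scaledStdPDF_comp_sub hs]

lemma integrable_scaledStdPDF_mixture {s : ℝ} (hs : 0 < s) (a b r : ℝ) :
    Integrable (fun q : ℝ × ℝ × ℝ =>
      scaledStdPDF s (q.2.1 - a - r * q.1) * scaledStdPDF s (q.2.2 - b - r * q.1) * stdPDF q.1)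
      (volume.prod volume) := by
  have hslice (u : ℝ) : Integrable (fun p : ℝ × ℝ =>
      scaledStdPDF s (p.1 - (a + r * u)) * scaledStdPDF s (p.2 - (b + r * u))) :=
    (integrable_scaledStdPDF_comp_sub hs.ne' _).mul_prod (integrable_scaledStdPDF_comp_sub hs.ne' _)
  have hmass (u : ℝ) : ∫ p : ℝ × ℝ,
      scaledStdPDF s (p.1 - (a + r * u)) * scaledStdPDF s (p.2 - (b + r * u)) = 1 := by
    rw [Measure.volume_eq_prod, integral_prod_mul (fun x => scaledStdPDF s (x - (a + r * u)))
      (fun y => scaledStdPDF s (y - (b + r * u))), integral_scaledStdPDF_comp_sub hs,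
      integral_scaledStdPDF_comp_sub hs, one_mul]
  rw [integrable_prod_iff (by fun_prop)]
  refine ⟨ae_of_all _ fun u => ?_, integrable_stdPDF.congr (ae_of_all _ fun u => ?_)⟩
  · simpa only [sub_sub] using (hslice u).mul_const (stdPDF u)
  · simp only [Real.norm_eq_abs, sub_sub]
    simp only [abs_of_nonneg (mul_nonneg (mul_nonneg (scaledStdPDF_nonneg hs.le _)
      (scaledStdPDF_nonneg hs.le _)) (stdPDF_nonneg _))]
    rw [integral_mul_const, hmass, one_mul]

lemma setIntegral_prod_Iio_bvnPDF_sq {r s : ℝ} (hs : 0 < s) (hs2 : s ^ 2 = 1 - r ^ 2)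
    (μ₁ μ₂ c₁ c₂ : ℝ) :
    ∫ p in Iio c₁ ×ˢ Iio c₂, bvnPDF μ₁ μ₂ (r ^ 2) p.1 p.2
      = ∫ u, stdCDF ((c₁ - μ₁ - r * u) / s) * stdCDF ((c₂ - μ₂ - r * u) / s) * stdPDF u := by
  simp_rw [bvnPDF_sq_eq_integral hs hs2]
  rw [← integral_integral_swap ((integrable_scaledStdPDF_mixture hs μ₁ μ₂ r).mono_measure
    (Measure.prod_mono le_rfl Measure.restrict_le_self))]
  refine integral_congr_ae (ae_of_all _ fun u => ?_)
  simp only [integral_mul_const, sub_sub, setIntegral_prod_Iio_scaledStdPDF_mul hs]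

theorem statement8 (μ₁ μ₂ c₁ c₂ ρ : ℝ) (hρ : ρ ∈ Set.Ico (0 : ℝ) 1) :
    ∫ p in {p : ℝ × ℝ | p.1 < c₁ ∧ p.2 < c₂}, bvnPDF μ₁ μ₂ ρ p.1 p.2
      = ∫ u : ℝ, stdCDF ((c₁ - μ₁ - Real.sqrt ρ * u) / Real.sqrt (1 - ρ))
          * stdCDF ((c₂ - μ₂ - Real.sqrt ρ * u) / Real.sqrt (1 - ρ)) * stdPDF u := by
  obtain ⟨hρ0, hρ1⟩ := hρ
  have h := setIntegral_prod_Iio_bvnPDF_sq (r := √ρ) (s := √(1 - ρ))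
    (sqrt_pos.2 (sub_pos.2 hρ1)) (by rw [sq_sqrt hρ0, sq_sqrt (sub_pos.2 hρ1).le]) μ₁ μ₂ c₁ c₂
  rwa [sq_sqrt hρ0] at h
end

section
/- Let z > 0 and μ ∈ (z, z+1). Then φ(z+μ)[1 − (z+μ)²] − φ(z−μ)[1 − (z−μ)²] ≤ −4φ(z+μ)·z·μ < 0; in particular, the function H(μ) = φ(z+μ)(z+μ) + φ(z−μ)(z−μ) has strictly negative derivative on the interval (z, z+1). -/
open MeasureTheory Real Set Filter Asymptotics

/-
Put `a = z + μ` and `b = z - μ`, so that `a² - b² = 4zμ > 0` and `|b| < 1`. Since `φ` decreases in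
`x²`, `φ a ≤ φ b`, and as `1 - b² ≥ 0`,
`φ a (1 - a²) - φ b (1 - b²) = (φ a - φ b)(1 - b²) + φ a (b² - a²) ≤ -4zμ φ a`.
The left-hand side is the derivative of `H`, because `(φ x · x)' = φ x (1 - x²)`.
-/

lemma stdPDF_pos (x : ℝ) : 0 < stdPDF x := by
  unfold stdPDF
  positivity

lemma stdPDF_le_stdPDF_of_sq_le {a b : ℝ} (h : b ^ 2 ≤ a ^ 2) : stdPDF a ≤ stdPDF b := by
  unfold stdPDF
  gcongr

lemma hasDerivAt_stdPDF_mul_self (x : ℝ) :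
    HasDerivAt (fun x => stdPDF x * x) (stdPDF x * (1 - x ^ 2)) x := by
  have hq : HasDerivAt (fun x : ℝ => -x ^ 2 / 2) (-x) x :=
    ((hasDerivAt_pow 2 x).neg.div_const 2).congr_deriv (by ring)
  refine ((hq.exp.const_mul (Real.sqrt (2 * Real.pi))⁻¹).mul (hasDerivAt_id x)).congr_deriv ?_
  simp only [stdPDF, id]
  ring

lemma hasDerivAt_stdPDF_mul_self_add_sub (z μ : ℝ) :
    HasDerivAt (fun m => stdPDF (z + m) * (z + m) + stdPDF (z - m) * (z - m))
      (stdPDF (z + μ) * (1 - (z + μ) ^ 2) - stdPDF (z - μ) * (1 - (z - μ) ^ 2)) μ := by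
  have hplus := (hasDerivAt_stdPDF_mul_self (z + μ)).comp μ ((hasDerivAt_id μ).const_add z)
  have hminus := (hasDerivAt_stdPDF_mul_self (z - μ)).comp μ ((hasDerivAt_id μ).const_sub z)
  exact (hplus.add hminus).congr_deriv (by ring)

lemma stdPDF_mul_one_sub_sq_sub_le {a b : ℝ} (hab : b ^ 2 ≤ a ^ 2) (hb : b ^ 2 ≤ 1) :
    stdPDF a * (1 - a ^ 2) - stdPDF b * (1 - b ^ 2) ≤ stdPDF a * (b ^ 2 - a ^ 2) := by
  have hφ : (stdPDF a - stdPDF b) * (1 - b ^ 2) ≤ 0 :=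
    mul_nonpos_of_nonpos_of_nonneg (sub_nonpos.2 (stdPDF_le_stdPDF_of_sq_le hab)) (sub_nonneg.2 hb)
  linarith

theorem statement14 (z μ : ℝ) (hz : 0 < z) (hμ : μ ∈ Set.Ioo z (z + 1)) :
    stdPDF (z + μ) * (1 - (z + μ) ^ 2) - stdPDF (z - μ) * (1 - (z - μ) ^ 2)
        ≤ -4 * stdPDF (z + μ) * z * μ ∧
    -4 * stdPDF (z + μ) * z * μ < 0 ∧
    deriv (fun m => stdPDF (z + m) * (z + m) + stdPDF (z - m) * (z - m)) μ < 0 := by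
  obtain ⟨hzμ, hμz⟩ := hμ
  have hμ_pos : 0 < μ := hz.trans hzμ
  have hsq : (z + μ) ^ 2 - (z - μ) ^ 2 = 4 * z * μ := by ring
  have hbound : stdPDF (z + μ) * (1 - (z + μ) ^ 2) - stdPDF (z - μ) * (1 - (z - μ) ^ 2)
      ≤ -4 * stdPDF (z + μ) * z * μ := by
    have hdiff := stdPDF_mul_one_sub_sq_sub_le (a := z + μ) (b := z - μ)
      (by nlinarith) (by nlinarith)
    linarith
  have hneg : -4 * stdPDF (z + μ) * z * μ < 0 := by
    have hprod := mul_pos (mul_pos (stdPDF_pos (z + μ)) hz) hμ_pos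
    linarith
  refine ⟨hbound, hneg, ?_⟩
  rw [(hasDerivAt_stdPDF_mul_self_add_sub z μ).deriv]
  exact hbound.trans_lt hneg
end
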